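/- arXiv:1912.04972 — 4 statements merged into one kernel-verified Lean document; each statement's English description precedes it below -/
import Mathlib

section
/- For every integer k ≥ 2, the set of k-free positive integers has natural density 1/ζ(k); that is, if Q_k(x) denotes the number of k-free positive integers not exceeding x, then Q_k(x)/x tends to 1/ζ(k) as x → ∞. -/
open Filter MeasureTheory Finset

/-- `n` is `k`-free: no `d^k` with `d > 1` divides `n`. -/
def KFree (k n : ℕ) : Prop := ∀ d : ℕ, 1 < d → ¬ d ^ k ∣ n

open Classical in
/-- `Q k x` = number of `k`-free positive integers not exceeding `x`. -/
noncomputable def Qf (k : ℕ) (x : ℝ) : ℕ :=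
  ((Finset.Icc 1 ⌊x⌋₊).filter fun n => KFree k n).card

/-- `R k x = Q_k(x) - x / ζ(k)`. -/
noncomputable def Rf (k : ℕ) (x : ℝ) : ℝ :=
  (Qf k x : ℝ) - x / (riemannZeta k).re

/-!
The `d` with `d ^ k ∣ n` are exactly the divisors of `m = ∏ p ^ ⌊v_p(n) / k⌋`, and `n` is
`k`-free iff `m = 1`; so `∑_{d ^ k ∣ n} μ(d)` is the indicator of `k`-freeness. Summing over
`n ≤ x` gives `Q_k(x) = ∑_d μ(d) ⌊x / d ^ k⌋`. After dividing by `x` the `d`-th term tends to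
`μ(d) / d ^ k` and is bounded by `d ^ (-k)`, which is summable for `k ≥ 2`, so by dominated
convergence `Q_k(x) / x → ∑_d μ(d) / d ^ k = 1 / ζ(k)`.
-/

open ArithmeticFunction
open scoped ArithmeticFunction.Moebius Topology

theorem sum_divisors_moebius (n : ℕ) : ∑ d ∈ n.divisors, (μ d : ℤ) = if n = 1 then 1 else 0 := by
  rw [← coe_mul_zeta_apply, moebius_mul_coe_zeta, one_apply]

theorem Nat.exists_dvd_iff_pow_dvd {k n : ℕ} (hk : k ≠ 0) (hn : n ≠ 0) :
    ∃ m, ∀ d, d ∣ m ↔ d ^ k ∣ n := by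
  set f : ℕ →₀ ℕ := n.factorization.mapRange (· / k) (Nat.zero_div k)
  have hf : ∀ p ∈ f.support, p.Prime := fun p hp =>
    Nat.prime_of_mem_primeFactors (Finsupp.support_mapRange hp)
  refine ⟨f.prod (· ^ ·), fun d => ?_⟩
  have hm : f.prod (· ^ ·) ≠ 0 := by
    rw [Finsupp.prod_ne_zero_iff]; exact fun p hp => pow_ne_zero _ (hf p hp).ne_zero
  rcases eq_or_ne d 0 with rfl | hd
  · simp [hm, zero_pow hk, hn]
  rw [← Nat.factorization_le_iff_dvd hd hm, Nat.prod_pow_factorization_eq_self hf,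
    ← Nat.factorization_le_iff_dvd (pow_ne_zero k hd) hn, Nat.factorization_pow]
  refine forall_congr' fun p => ?_
  simp only [f, Finsupp.mapRange_apply, Finsupp.smul_apply, smul_eq_mul]
  rw [Nat.le_div_iff_mul_le (Nat.pos_of_ne_zero hk), mul_comm]

theorem kFree_iff_eq_one_of_dvd_iff_pow_dvd {k n m : ℕ} (hm : ∀ d, d ∣ m ↔ d ^ k ∣ n) :
    KFree k n ↔ m = 1 := by
  refine ⟨fun h => ?_, fun h d hd hdn => ?_⟩
  · rcases m with _ | _ | m
    · exact absurd ((hm 2).mp (dvd_zero 2)) (h 2 one_lt_two)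
    · rfl
    · exact absurd ((hm _).mp dvd_rfl) (h _ (by omega))
  · have := Nat.le_of_dvd one_pos (h ▸ (hm d).mpr hdn)
    omega

open Classical in
theorem sum_moebius_filter_pow_dvd {k n : ℕ} (hk : k ≠ 0) (hn : n ≠ 0) {s : Finset ℕ}
    (hs : n.divisors ⊆ s) :
    ∑ d ∈ s with d ^ k ∣ n, (μ d : ℤ) = if KFree k n then 1 else 0 := by
  obtain ⟨m, hm⟩ := Nat.exists_dvd_iff_pow_dvd hk hn
  have hm0 : m ≠ 0 := fun h => by simpa [zero_pow hk, hn] using (hm 0).mp (h ▸ dvd_rfl)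
  have hfilter : {d ∈ s | d ^ k ∣ n} = m.divisors := by
    ext d
    simp only [mem_filter, Nat.mem_divisors, hm, ne_eq, hm0, not_false_eq_true, and_true,
      and_iff_right_iff_imp]
    exact fun hd => hs (Nat.mem_divisors.mpr ⟨(dvd_pow_self d hk).trans hd, hn⟩)
  simp only [hfilter, sum_divisors_moebius, kFree_iff_eq_one_of_dvd_iff_pow_dvd hm]

open Classical in
theorem card_filter_kFree_eq_sum {k : ℕ} (hk : k ≠ 0) (N : ℕ) :
    (#{n ∈ Icc 1 N | KFree k n} : ℤ) = ∑ d ∈ range (N + 1), (μ d : ℤ) * (N / d ^ k : ℕ) := by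
  calc (#{n ∈ Icc 1 N | KFree k n} : ℤ)
      = ∑ n ∈ Icc 1 N, ∑ d ∈ range (N + 1) with d ^ k ∣ n, (μ d : ℤ) := by
        rw [card_filter, Nat.cast_sum]
        refine sum_congr rfl fun n hn => ?_
        rw [mem_Icc] at hn
        rw [sum_moebius_filter_pow_dvd hk (by omega) fun d hd => ?_]
        · push_cast; rfl
        · exact mem_range.mpr (Nat.lt_succ_of_le ((Nat.divisor_le hd).trans hn.2))
    _ = ∑ d ∈ range (N + 1), (μ d : ℤ) * #{n ∈ Icc 1 N | d ^ k ∣ n} := by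
        simp_rw [sum_filter]
        rw [sum_comm]
        refine sum_congr rfl fun d _ => ?_
        rw [card_filter, Nat.cast_sum, mul_sum]
        refine sum_congr rfl fun n _ => ?_
        split_ifs <;> simp
    _ = ∑ d ∈ range (N + 1), (μ d : ℤ) * (N / d ^ k : ℕ) := by
        simp only [show Icc 1 N = Ioc 0 N from Icc_add_one_left_eq_Ioc 0 N,
          Nat.Ioc_filter_dvd_card_eq_div]

theorem Qf_eq_tsum {k : ℕ} (hk : k ≠ 0) (x : ℝ) :
    (Qf k x : ℝ) = ∑' d : ℕ, (μ d : ℝ) * (⌊x⌋₊ / d ^ k : ℕ) := by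
  have h := congrArg (Int.cast : ℤ → ℝ) (card_filter_kFree_eq_sum hk ⌊x⌋₊)
  simp only [Int.cast_sum, Int.cast_mul, Int.cast_natCast] at h
  rw [Qf, h, tsum_eq_sum fun d hd => ?_]
  have hxd : ⌊x⌋₊ < d := by simpa [Nat.lt_succ_iff] using hd
  rw [Nat.div_eq_of_lt (hxd.trans_le (Nat.le_self_pow hk d)), Nat.cast_zero, mul_zero]

theorem tendsto_nat_floor_div_nat_div_atTop (m : ℕ) :
    Tendsto (fun x : ℝ => ((⌊x⌋₊ / m : ℕ) : ℝ) / x) atTop (𝓝 (m : ℝ)⁻¹) := by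
  simp_rw [← Nat.floor_div_natCast, div_eq_inv_mul _ (m : ℝ)]
  exact tendsto_nat_floor_mul_div_atTop (by positivity)

theorem nat_floor_div_nat_div_le {x : ℝ} (hx : 0 < x) (m : ℕ) :
    ((⌊x⌋₊ / m : ℕ) : ℝ) / x ≤ (m : ℝ)⁻¹ := by
  rw [← Nat.floor_div_natCast, div_le_iff₀ hx, ← div_eq_inv_mul]
  exact Nat.floor_le (by positivity)

theorem tendsto_Qf_div_atTop {k : ℕ} (hk : 1 < k) :
    Tendsto (fun x => (Qf k x : ℝ) / x) atTop (𝓝 (∑' d : ℕ, (μ d : ℝ) / d ^ k)) := by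
  have hbound : Summable fun d : ℕ => ((d : ℝ) ^ k)⁻¹ := Real.summable_nat_pow_inv.mpr hk
  simp_rw [Qf_eq_tsum (by omega : k ≠ 0), ← tsum_div_const, mul_div_assoc]
  refine tendsto_tsum_of_dominated_convergence hbound (fun d => ?_) ?_
  · simpa [div_eq_mul_inv] using
      (tendsto_nat_floor_div_nat_div_atTop (d ^ k)).const_mul (μ d : ℝ)
  · filter_upwards [eventually_gt_atTop 0] with x hx d
    rw [norm_mul, Real.norm_of_nonneg (r := _ / x) (by positivity), Real.norm_eq_abs]
    calc |(μ d : ℝ)| * (((⌊x⌋₊ / d ^ k : ℕ) : ℝ) / x) ≤ 1 * ((d : ℝ) ^ k)⁻¹ := by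
          gcongr
          · exact_mod_cast abs_moebius_le_one
          · exact_mod_cast nat_floor_div_nat_div_le hx (d ^ k)
      _ = ((d : ℝ) ^ k)⁻¹ := one_mul _

theorem LSeries_moebius_eq_inv_riemannZeta {s : ℂ} (hs : 1 < s.re) :
    LSeries (fun n => (μ n : ℂ)) s = (riemannZeta s)⁻¹ := by
  refine eq_inv_of_mul_eq_one_left ?_
  rw [mul_comm, ← LSeries_zeta_eq_riemannZeta hs]
  exact LSeries_zeta_mul_Lseries_moebius hs

theorem ofReal_tsum_moebius_div_pow (k : ℕ) :
    ((∑' d : ℕ, (μ d : ℝ) / d ^ k : ℝ) : ℂ) = LSeries (fun n => (μ n : ℂ)) k := by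
  rw [Complex.ofReal_tsum, LSeries]
  refine tsum_congr fun d => ?_
  rcases eq_or_ne d 0 with rfl | hd
  · simp
  · simp [LSeries.term_of_ne_zero hd]

theorem kfree_density (k : ℕ) (hk : 2 ≤ k) :
    Tendsto (fun x : ℝ => (Qf k x : ℂ) / (x : ℂ)) atTop
      (nhds (1 / riemannZeta k)) := by
  have hk1 : 1 < k := hk
  have h := (Complex.continuous_ofReal.tendsto _).comp (tendsto_Qf_div_atTop hk1)
  rw [ofReal_tsum_moebius_div_pow,
    LSeries_moebius_eq_inv_riemannZeta (by exact_mod_cast hk1), ← one_div] at h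
  exact h.congr fun x => by simp
end

section
/- For every integer k ≥ 2, the error term R_k(x) = Q_k(x) − x/ζ(k) satisfies R_k(x) = O(x^{1/k}). -/
open Filter MeasureTheory Finset

/-!
Möbius inversion over the divisors of the largest `m` with `m ^ k ∣ n` (`Nat.floorRoot k n`)
gives `Q_k(x) = ∑_{d ≤ D} μ(d) ⌊x / d^k⌋` as soon as `x < (D + 1)^k`, while
`1/ζ(k) = ∑_d μ(d) / d^k`. Taking `D = ⌊x^{1/k}⌋`, the difference `R_k(x)` is a sum of
`D + 1` rounding errors of size at most `1` plus `x` times the tail `∑_{d > D} μ(d)/d^k`,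
which is at most `2 / (D + 1)^(k-1) ≤ 2 (D + 1) / x`. Hence `|R_k(x)| ≤ 3 (x^{1/k} + 1)`.
-/

open ArithmeticFunction
open scoped ArithmeticFunction.Moebius

theorem kFree_iff_floorRoot_eq_one {k n : ℕ} (hk : k ≠ 0) :
    KFree k n ↔ Nat.floorRoot k n = 1 := by
  constructor
  · intro h
    have hn : n ≠ 0 := by
      rintro rfl
      exact h 2 one_lt_two (dvd_zero _)
    have hr : Nat.floorRoot k n ≠ 0 := Nat.floorRoot_ne_zero.2 ⟨hk, hn⟩
    by_contra hne
    exact h _ (by omega) Nat.floorRoot_pow_dvd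
  · intro h d hd hdvd
    rw [Nat.pow_dvd_iff_dvd_floorRoot, h, Nat.dvd_one] at hdvd
    omega

open Classical in
theorem sum_moebius_divisors_floorRoot {k : ℕ} (hk : k ≠ 0) (n : ℕ) :
    ∑ d ∈ (Nat.floorRoot k n).divisors, μ d = if KFree k n then 1 else 0 := by
  rw [← coe_mul_zeta_apply, moebius_mul_coe_zeta, one_apply]
  exact if_congr (kFree_iff_floorRoot_eq_one hk).symm rfl rfl

theorem filter_pow_dvd_eq_divisors_floorRoot {k n D : ℕ} (hk : k ≠ 0) (hn : n ≠ 0)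
    (hnD : n < (D + 1) ^ k) :
    {d ∈ range (D + 1) | d ^ k ∣ n} = (Nat.floorRoot k n).divisors := by
  ext d
  rw [mem_filter, mem_range, Nat.mem_divisors, ← Nat.pow_dvd_iff_dvd_floorRoot,
    Ne, Nat.floorRoot_eq_zero]
  refine ⟨fun h => ⟨h.2, by tauto⟩, fun h => ⟨?_, h.1⟩⟩
  have hd : d ^ k < (D + 1) ^ k := (Nat.le_of_dvd (by omega) h.1).trans_lt hnD
  exact (Nat.pow_lt_pow_iff_left hk).1 hd

open Classical in
theorem card_filter_kFree_Icc {k N D : ℕ} (hk : k ≠ 0) (hND : N < (D + 1) ^ k) :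
    (#{n ∈ Icc 1 N | KFree k n} : ℤ) = ∑ d ∈ range (D + 1), μ d * (N / d ^ k : ℕ) := by
  have hmoeb : ∀ n ∈ Icc 1 N,
      (if KFree k n then 1 else 0 : ℤ) = ∑ d ∈ range (D + 1), if d ^ k ∣ n then μ d else 0 := by
    intro n hn
    have hn : 1 ≤ n ∧ n ≤ N := mem_Icc.1 hn
    rw [← sum_filter, filter_pow_dvd_eq_divisors_floorRoot hk (by omega) (by omega),
      sum_moebius_divisors_floorRoot hk]
  have hcount : ∀ d, #{n ∈ Icc 1 N | d ^ k ∣ n} = N / d ^ k := fun d => by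
    rw [← Nat.Ioc_filter_dvd_card_eq_div]; rfl
  rw [card_filter, Nat.cast_sum, sum_congr rfl fun n hn => by push_cast; exact hmoeb n hn, sum_comm]
  refine sum_congr rfl fun d _ => ?_
  rw [← sum_filter, sum_const, hcount, nsmul_eq_mul, mul_comm]

theorem hasSum_moebius_div_pow {k : ℕ} (hk : 1 < k) :
    HasSum (fun d : ℕ => (μ d : ℝ) / d ^ k) (riemannZeta k).re⁻¹ := by
  have hre : 1 < (k : ℂ).re := by simpa using hk
  have hL : LSeries (fun n => (μ n : ℂ)) k = (riemannZeta k)⁻¹ := by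
    rw [← LSeries_zeta_eq_riemannZeta hre]
    exact eq_inv_of_mul_eq_one_right (LSeries_zeta_mul_Lseries_moebius hre)
  have hsumℂ : HasSum (fun d : ℕ => (((μ d : ℝ) / d ^ k : ℝ) : ℂ)) (riemannZeta k)⁻¹ := by
    rw [← hL]
    have h := (LSeriesSummable_moebius_iff.2 hre).LSeriesHasSum
    unfold LSeriesHasSum at h
    convert h using 1
    ext n
    rcases eq_or_ne n 0 with rfl | hn
    · simp
    · simp [LSeries.term_of_ne_zero hn]
  have hsum := (Complex.summable_ofReal.1 hsumℂ.summable).hasSum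
  have hζ : riemannZeta k = ((∑' d : ℕ, (μ d : ℝ) / d ^ k)⁻¹ : ℝ) := by
    rw [Complex.ofReal_inv, ← hsumℂ.unique (Complex.hasSum_ofReal.2 hsum), inv_inv]
  rwa [hζ, Complex.ofReal_re, inv_inv]

noncomputable def moebiusTail (k D : ℕ) : ℝ :=
  ∑' i, (μ (i + (D + 1)) : ℝ) / ((i + (D + 1) : ℕ) : ℝ) ^ k

theorem abs_moebius_div_pow_le {k m : ℕ} {a : ℝ} (hk : 2 ≤ k) (ha : 0 < a) (ham : a ≤ m) :
    |(μ m : ℝ) / (m : ℝ) ^ k| ≤ (a ^ (k - 2))⁻¹ * ((m : ℝ) ^ 2)⁻¹ := by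
  have hm : (0 : ℝ) < m := ha.trans_le ham
  have hμ : |(μ m : ℝ)| ≤ 1 := by exact_mod_cast abs_moebius_le_one
  rw [abs_div, abs_of_nonneg (by positivity : (0 : ℝ) ≤ (m : ℝ) ^ k), ← mul_inv]
  calc |(μ m : ℝ)| / (m : ℝ) ^ k ≤ ((m : ℝ) ^ k)⁻¹ := by
        rw [← one_div]
        gcongr
    _ ≤ (a ^ (k - 2) * (m : ℝ) ^ 2)⁻¹ := by
        refine inv_anti₀ (by positivity) ?_
        calc a ^ (k - 2) * (m : ℝ) ^ 2 ≤ (m : ℝ) ^ (k - 2) * (m : ℝ) ^ 2 := by gcongr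
          _ = (m : ℝ) ^ k := by rw [← pow_add, Nat.sub_add_cancel hk]

theorem sum_range_inv_sq_nat_add_le (D n : ℕ) :
    ∑ i ∈ range n, (((i + (D + 1) : ℕ) : ℝ) ^ 2)⁻¹ ≤ 2 / (D + 1) := by
  rw [range_eq_Ico, sum_Ico_add' (fun j : ℕ => ((j : ℝ) ^ 2)⁻¹), zero_add,
    Ico_add_one_left_eq_Ioo]
  exact sum_Ioo_inv_sq_le D _

theorem abs_moebiusTail_le {k : ℕ} (hk : 2 ≤ k) (D : ℕ) :
    |moebiusTail k D| ≤ 2 / (D + 1) ^ (k - 1) := by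
  set f : ℕ → ℝ := fun i => |(μ (i + (D + 1)) : ℝ) / ((i + (D + 1) : ℕ) : ℝ) ^ k|
  have hpartial : ∀ n, ∑ i ∈ range n, f i ≤ 2 / (D + 1) ^ (k - 1) := fun n =>
    calc ∑ i ∈ range n, f i
        ≤ ∑ i ∈ range n, ((D + 1 : ℝ) ^ (k - 2))⁻¹ * (((i + (D + 1) : ℕ) : ℝ) ^ 2)⁻¹ :=
          sum_le_sum fun i _ => abs_moebius_div_pow_le hk (by positivity) (by push_cast; linarith)
      _ ≤ ((D + 1 : ℝ) ^ (k - 2))⁻¹ * (2 / (D + 1)) := by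
          rw [← mul_sum]
          gcongr
          exact sum_range_inv_sq_nat_add_le D n
      _ = 2 / (D + 1) ^ (k - 1) := by
          rw [show k - 1 = k - 2 + 1 by omega, pow_succ]
          field_simp
  have hf : Summable f := summable_of_sum_range_le (fun _ => abs_nonneg _) hpartial
  calc _ ≤ ∑' i, f i := by
        rw [moebiusTail, ← Real.norm_eq_abs]
        exact norm_tsum_le_tsum_norm hf
    _ ≤ 2 / (D + 1) ^ (k - 1) := Real.tsum_le_of_sum_range_le (fun _ => abs_nonneg _) hpartial

theorem Qf_eq_sum_moebius_mul_floor {k : ℕ} (hk : k ≠ 0) {x : ℝ} {D : ℕ}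
    (hxD : x < (D + 1) ^ k) :
    (Qf k x : ℝ) = ∑ d ∈ range (D + 1), (μ d : ℝ) * ⌊x / d ^ k⌋₊ := by
  have hND : ⌊x⌋₊ < (D + 1) ^ k := (Nat.floor_lt' (by positivity)).2 (by exact_mod_cast hxD)
  have h := congrArg (Int.cast : ℤ → ℝ) (card_filter_kFree_Icc hk hND)
  simp only [Int.cast_sum, Int.cast_mul, Int.cast_natCast] at h
  rw [Qf, h]
  refine sum_congr rfl fun d _ => ?_
  rw [← Nat.cast_pow, Nat.floor_div_natCast]

theorem Rf_eq_sum_sub_tail {k : ℕ} (hk : 1 < k) {x : ℝ} {D : ℕ} (hxD : x < (D + 1) ^ k) :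
    Rf k x = ∑ d ∈ range (D + 1), (μ d : ℝ) * (⌊x / d ^ k⌋₊ - x / d ^ k)
      - x * moebiusTail k D := by
  have htail := (hasSum_nat_add_iff' (D + 1)).2 (hasSum_moebius_div_pow hk)
  have hsplit : ∑ d ∈ range (D + 1), (μ d : ℝ) * (x / d ^ k) =
      x * ∑ d ∈ range (D + 1), (μ d : ℝ) / d ^ k := by
    rw [mul_sum]
    exact sum_congr rfl fun _ _ => by ring
  rw [Rf, Qf_eq_sum_moebius_mul_floor (by omega) hxD, moebiusTail, htail.tsum_eq]
  simp only [mul_sub, sum_sub_distrib, hsplit]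
  ring

theorem abs_Rf_le {k : ℕ} (hk : 2 ≤ k) {x : ℝ} (hx : 0 ≤ x) {D : ℕ} (hxD : x < (D + 1) ^ k) :
    |Rf k x| ≤ 3 * (D + 1) := by
  have hmain : |∑ d ∈ range (D + 1), (μ d : ℝ) * (⌊x / d ^ k⌋₊ - x / d ^ k)| ≤ D + 1 := by
    refine (abs_sum_le_sum_abs _ _).trans ?_
    calc ∑ d ∈ range (D + 1), |(μ d : ℝ) * (⌊x / d ^ k⌋₊ - x / d ^ k)|
        ≤ ∑ _d ∈ range (D + 1), (1 : ℝ) := sum_le_sum fun d _ => by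
          rw [abs_mul, ← one_mul 1]
          exact mul_le_mul (by exact_mod_cast abs_moebius_le_one)
            (Nat.abs_floor_sub_le (by positivity)) (abs_nonneg _) zero_le_one
      _ = D + 1 := by simp
  have htail : x * |moebiusTail k D| ≤ 2 * (D + 1) :=
    calc _ ≤ ((D : ℝ) + 1) ^ k * (2 / (D + 1) ^ (k - 1)) :=
          mul_le_mul hxD.le (abs_moebiusTail_le hk D) (abs_nonneg _)
            (by positivity)
      _ = 2 * (D + 1) := by
          rw [show k = k - 1 + 1 by omega, pow_succ, Nat.add_sub_cancel]
          field_simp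
  rw [Rf_eq_sum_sub_tail (by omega) hxD]
  calc _ ≤ |∑ d ∈ range (D + 1), (μ d : ℝ) * (⌊x / d ^ k⌋₊ - x / d ^ k)| +
        x * |moebiusTail k D| := by
        rw [← abs_of_nonneg hx, ← abs_mul, abs_of_nonneg hx]
        exact abs_sub _ _
    _ ≤ 3 * (D + 1) := by linarith

theorem Rk_bigO (k : ℕ) (hk : 2 ≤ k) :
    (fun x : ℝ => Rf k x) =O[atTop] fun x : ℝ => x ^ ((1 : ℝ) / k) := by
  refine Asymptotics.isBigO_iff.2 ⟨6, ?_⟩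
  filter_upwards [eventually_ge_atTop 1] with x hx
  set y := x ^ ((1 : ℝ) / k)
  have hy : 1 ≤ y := Real.one_le_rpow hx (by positivity)
  have hxy : x < (⌊y⌋₊ + 1) ^ k := by
    have hyk : y ^ k = x := by
      simp only [y, one_div]
      exact Real.rpow_inv_natCast_pow (by linarith) (by omega)
    rw [← hyk]
    exact pow_lt_pow_left₀ (Nat.lt_floor_add_one y) (by linarith) (by omega)
  rw [Real.norm_eq_abs, Real.norm_of_nonneg (by linarith)]
  calc |Rf k x| ≤ 3 * (⌊y⌋₊ + 1) := abs_Rf_le hk (by linarith) hxy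
    _ ≤ 3 * (y + 1) := by gcongr; exact Nat.floor_le (by linarith)
    _ ≤ 6 * y := by linarith
end

section
/- Let n be a positive integer with n ≤ (x/4)^{1/3} and x ≥ 1. Then Q_2(x) = ∑_{a=1}^{x_n} μ(a)⌊x/a²⌋ + ∑_{k=1}^{n−1} M(x_k) − (n−1) M(x_n), where x_k = ⌊√(x/k)⌋ and M(y) = ∑_{m ≤ y} μ(m) is the Mertens function. -/
open Filter MeasureTheory Finset

/-- Mertens function at a natural number cutoff. -/
def Mertens (N : ℕ) : ℤ := ∑ m ∈ Finset.Icc 1 N, ArithmeticFunction.moebius m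

/-!
Legendre's identity `[m squarefree] = ∑_{d² ∣ m} μ(d)` gives `Q₂(x) = ∑_{a ≤ √x} μ(a) ⌊x/a²⌋`.
Since `a ≤ x_k ↔ k a² ≤ x`, for `x_n < a ≤ x_1` the weight `⌊x/a²⌋` counts the `k < n` with
`a ≤ x_k`; exchanging the order of summation turns the part of the sum over `x_n < a ≤ x_1`
into `∑_{k < n} (M(x_k) - M(x_n))`.
-/

open ArithmeticFunction
open scoped ArithmeticFunction.Moebius

theorem kFree_two_iff_squarefree {m : ℕ} : KFree 2 m ↔ Squarefree m :=
  ⟨fun h => Nat.squarefree_iff_prime_squarefree.2 fun p hp => by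
      simpa only [sq] using h p hp.one_lt,
    fun h d hd hdm => hd.ne' (Nat.isUnit_iff.1 (h d (sq d ▸ hdm)))⟩

theorem Nat.sq_dvd_sq_mul_iff_dvd {a b d : ℕ} (ha : Squarefree a) :
    d ^ 2 ∣ b ^ 2 * a ↔ d ∣ b := by
  refine ⟨fun h => ?_, fun h => (pow_dvd_pow_of_dvd h 2).mul_right a⟩
  rcases eq_or_ne b 0 with rfl | hb
  · exact dvd_zero d
  have hd : d ≠ 0 := by rintro rfl; simp [hb, ha.ne_zero] at h
  rw [← Nat.factorization_le_iff_dvd hd hb]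
  rw [← Nat.factorization_le_iff_dvd (pow_ne_zero 2 hd)
    (mul_ne_zero (pow_ne_zero 2 hb) ha.ne_zero)] at h
  intro p
  have hp := h p
  simp only [Nat.factorization_mul (pow_ne_zero 2 hb) ha.ne_zero, Nat.factorization_pow,
    Finsupp.coe_add, Finsupp.coe_smul, Pi.add_apply, Pi.smul_apply, smul_eq_mul] at hp
  -- `2 v_p(d) ≤ 2 v_p(b) + v_p(a)` with `v_p(a) ≤ 1`
  have := (Nat.squarefree_iff_factorization_le_one ha.ne_zero).1 ha p
  omega

theorem sum_moebius_divisors (n : ℕ) : ∑ d ∈ n.divisors, μ d = if n = 1 then 1 else 0 := by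
  simpa only [coe_mul_zeta_apply, one_apply] using congr($moebius_mul_coe_zeta n)

theorem sum_moebius_sq_dvd {m : ℕ} (hm : m ≠ 0) :
    ∑ d ∈ m.divisors with d ^ 2 ∣ m, μ d = if Squarefree m then 1 else 0 := by
  obtain ⟨a, b, rfl, ha⟩ := Nat.sq_mul_squarefree m
  have hb : b ≠ 0 := by rintro rfl; simp at hm
  have hdiv : {d ∈ (b ^ 2 * a).divisors | d ^ 2 ∣ b ^ 2 * a} = b.divisors := by
    ext d
    simp only [mem_filter, Nat.mem_divisors, Nat.sq_dvd_sq_mul_iff_dvd ha]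
    exact ⟨fun h => ⟨h.2, hb⟩, fun h => ⟨⟨(dvd_pow h.1 two_ne_zero).mul_right a, hm⟩, h.1⟩⟩
  have hsq : Squarefree (b ^ 2 * a) ↔ b = 1 :=
    ⟨fun h => Nat.isUnit_iff.1 (h b (Dvd.intro a (by ring))), by rintro rfl; simpa using ha⟩
  simp only [hdiv, sum_moebius_divisors, hsq]

theorem card_filter_squarefree_Icc (N : ℕ) :
    (#{m ∈ Icc 1 N | Squarefree m} : ℤ) = ∑ d ∈ Icc 1 N.sqrt, μ d * (N / d ^ 2 : ℕ) := by
  calc (#{m ∈ Icc 1 N | Squarefree m} : ℤ)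
      = ∑ m ∈ Icc 1 N, ∑ d ∈ m.divisors with d ^ 2 ∣ m, μ d := by
        rw [natCast_card_filter]
        exact sum_congr rfl fun m hm => (sum_moebius_sq_dvd (by simp at hm; omega)).symm
    _ = ∑ d ∈ Icc 1 N.sqrt, ∑ m ∈ Icc 1 N with d ^ 2 ∣ m, μ d := by
        refine sum_comm' fun m d => ?_
        simp only [mem_Icc, mem_filter, Nat.mem_divisors, Nat.le_sqrt']
        constructor
        · rintro ⟨hm, ⟨-, -⟩, hdm⟩
          have hd : d ≠ 0 := by rintro rfl; simp at hdm; omega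
          exact ⟨⟨hm, hdm⟩, by omega, Nat.le_of_dvd (by omega) hdm |>.trans hm.2⟩
        · rintro ⟨⟨hm, hdm⟩, -⟩
          exact ⟨hm, ⟨(dvd_pow_self d two_ne_zero).trans hdm, by omega⟩, hdm⟩
    _ = ∑ d ∈ Icc 1 N.sqrt, μ d * (N / d ^ 2 : ℕ) := by
        refine sum_congr rfl fun d _ => ?_
        rw [sum_const, nsmul_eq_mul, mul_comm, ← Nat.Ioc_filter_dvd_card_eq_div]
        rfl

theorem le_floor_sqrt_iff {x : ℝ} (hx : 0 ≤ x) {a : ℕ} : a ≤ ⌊√x⌋₊ ↔ (a : ℝ) ^ 2 ≤ x := by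
  rw [Nat.le_floor_iff (Real.sqrt_nonneg x), Real.le_sqrt (Nat.cast_nonneg a) hx]

theorem floor_sqrt_eq_sqrt_floor {x : ℝ} (hx : 0 ≤ x) : ⌊√x⌋₊ = Nat.sqrt ⌊x⌋₊ :=
  eq_of_forall_le_iff fun a => by
    rw [le_floor_sqrt_iff hx, Nat.le_sqrt', Nat.le_floor_iff hx, Nat.cast_pow]

theorem le_floor_sqrt_div_iff {x : ℝ} (hx : 0 ≤ x) {a k : ℕ} (ha : 0 < a) (hk : 0 < k) :
    a ≤ ⌊√(x / k)⌋₊ ↔ k ≤ ⌊x / (a : ℝ) ^ 2⌋₊ := by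
  rw [le_floor_sqrt_iff (by positivity), Nat.le_floor_iff (by positivity),
    le_div_iff₀ (by positivity), le_div_iff₀ (by positivity), mul_comm]

theorem floor_sqrt_div_le_floor_sqrt_div {x : ℝ} (hx : 0 ≤ x) {j k : ℕ} (hj : 0 < j)
    (hjk : j ≤ k) : ⌊√(x / k)⌋₊ ≤ ⌊√(x / j)⌋₊ := by
  gcongr

theorem qf_two_eq_sum_moebius_mul_floor {x : ℝ} (hx : 0 ≤ x) :
    (Qf 2 x : ℤ) = ∑ a ∈ Icc 1 ⌊√x⌋₊, μ a * ⌊x / (a : ℝ) ^ 2⌋ := by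
  have hQ : Qf 2 x = #{m ∈ Icc 1 ⌊x⌋₊ | Squarefree m} := by
    simp only [Qf, kFree_two_iff_squarefree]
  rw [hQ, card_filter_squarefree_Icc, floor_sqrt_eq_sqrt_floor hx]
  refine sum_congr rfl fun a _ => ?_
  rw [← Int.natCast_floor_eq_floor (by positivity), ← Nat.floor_div_natCast, Nat.cast_pow]

theorem mertens_sub_mertens {j k : ℕ} (h : j ≤ k) :
    Mertens k - Mertens j = ∑ m ∈ Ioc j k, μ m := by
  rw [sub_eq_iff_eq_add']
  exact (sum_Ioc_consecutive _ (Nat.zero_le j) h).symm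

theorem sum_Ioc_moebius_mul_floor {x : ℝ} (hx : 0 ≤ x) {n : ℕ} (hn : 0 < n) :
    ∑ a ∈ Ioc ⌊√(x / n)⌋₊ ⌊√x⌋₊, μ a * ⌊x / (a : ℝ) ^ 2⌋
      = ∑ k ∈ Icc 1 (n - 1), (Mertens ⌊√(x / k)⌋₊ - Mertens ⌊√(x / n)⌋₊) := by
  calc ∑ a ∈ Ioc ⌊√(x / n)⌋₊ ⌊√x⌋₊, μ a * ⌊x / (a : ℝ) ^ 2⌋
      = ∑ a ∈ Ioc ⌊√(x / n)⌋₊ ⌊√x⌋₊, ∑ k ∈ Icc 1 ⌊x / (a : ℝ) ^ 2⌋₊, μ a := by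
        refine sum_congr rfl fun a _ => ?_
        rw [sum_const, Nat.card_Icc, Nat.add_sub_cancel, nsmul_eq_mul, mul_comm,
          Int.natCast_floor_eq_floor (by positivity)]
    _ = ∑ k ∈ Icc 1 (n - 1), ∑ a ∈ Ioc ⌊√(x / n)⌋₊ ⌊√(x / k)⌋₊, μ a := by
        refine sum_comm' fun a k => ?_
        simp only [mem_Ioc, mem_Icc]
        by_cases hna : ⌊√(x / n)⌋₊ < a
        · have ha : 0 < a := by omega
          have hFn : ⌊x / (a : ℝ) ^ 2⌋₊ < n :=
            lt_of_not_ge fun h => hna.not_ge ((le_floor_sqrt_div_iff hx ha hn).2 h)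
          by_cases hk : 0 < k
          · have hak := le_floor_sqrt_div_iff hx ha hk
            have hk1 : ⌊√(x / k)⌋₊ ≤ ⌊√x⌋₊ := by
              simpa using floor_sqrt_div_le_floor_sqrt_div hx one_pos hk
            constructor
            · rintro ⟨-, -, hkF⟩
              exact ⟨⟨hna, hak.2 hkF⟩, hk, by omega⟩
            · rintro ⟨⟨-, hak'⟩, -, -⟩
              exact ⟨⟨hna, hak'.trans hk1⟩, hk, hak.1 hak'⟩
          · omega
        · simp only [hna, false_and]
    _ = ∑ k ∈ Icc 1 (n - 1), (Mertens ⌊√(x / k)⌋₊ - Mertens ⌊√(x / n)⌋₊) := by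
        refine sum_congr rfl fun k hk => (mertens_sub_mertens ?_).symm
        rw [mem_Icc] at hk
        exact floor_sqrt_div_le_floor_sqrt_div hx hk.1 (by omega)

theorem Q2_fast_formula_general (x : ℝ) (hx : 1 ≤ x) (n : ℕ) (hn : 0 < n) :
    (Qf 2 x : ℤ) =
      (∑ a ∈ Finset.Icc 1 ⌊Real.sqrt (x / n)⌋₊,
        ArithmeticFunction.moebius a * ⌊x / (a : ℝ) ^ 2⌋)
      + (∑ k ∈ Finset.Icc 1 (n - 1), Mertens ⌊Real.sqrt (x / k)⌋₊)
      - (n - 1 : ℤ) * Mertens ⌊Real.sqrt (x / n)⌋₊ := by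
  have hx0 : 0 ≤ x := by linarith
  have hxn : ⌊√(x / n)⌋₊ ≤ ⌊√x⌋₊ := by
    simpa using floor_sqrt_div_le_floor_sqrt_div hx0 one_pos hn
  calc (Qf 2 x : ℤ) = ∑ a ∈ Icc 1 ⌊√x⌋₊, μ a * ⌊x / (a : ℝ) ^ 2⌋ :=
        qf_two_eq_sum_moebius_mul_floor hx0
    _ = (∑ a ∈ Icc 1 ⌊√(x / n)⌋₊, μ a * ⌊x / (a : ℝ) ^ 2⌋)
          + ∑ a ∈ Ioc ⌊√(x / n)⌋₊ ⌊√x⌋₊, μ a * ⌊x / (a : ℝ) ^ 2⌋ :=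
        (sum_Ioc_consecutive _ (Nat.zero_le _) hxn).symm
    _ = _ := by
        rw [sum_Ioc_moebius_mul_floor hx0 hn, sum_sub_distrib, sum_const, Nat.card_Icc,
          Nat.add_sub_cancel, nsmul_eq_mul, Nat.cast_pred hn]
        ring

theorem Q2_fast_formula (x : ℝ) (hx : 1 ≤ x) (n : ℕ) (hn : 0 < n)
    (hnx : (n : ℝ) ≤ (x / 4) ^ ((1 : ℝ) / 3)) :
    (Qf 2 x : ℤ) =
      (∑ a ∈ Finset.Icc 1 ⌊Real.sqrt (x / n)⌋₊,
        ArithmeticFunction.moebius a * ⌊x / (a : ℝ) ^ 2⌋)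
      + (∑ k ∈ Finset.Icc 1 (n - 1), Mertens ⌊Real.sqrt (x / k)⌋₊)
      - (n - 1 : ℤ) * Mertens ⌊Real.sqrt (x / n)⌋₊ :=
  Q2_fast_formula_general x hx n hn
end

section
/- The number of cubefree integers up to 239 is 202; equivalently Q_3(239) = 202, and hence R_3(239) = 202 − 239/ζ(3) > 1.27 · 239^{1/6}. -/
/-!
A cube dividing `n > 0` has base at most `n`, so `Q₃(239)` is a finite check. For the inequality,
the first hundred terms of `∑ n⁻³` give `ζ(3) > 1.202`, hence `239 / ζ(3) < 198.84`, while
`2.4914⁶ > 239` gives `239^{1/6} < 2.4914`.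
-/

open Filter MeasureTheory Finset

theorem kFree_iff_forall_mem_Icc {k n : ℕ} (hk : k ≠ 0) (hn : 0 < n) :
    KFree k n ↔ ∀ d ∈ Icc 2 n, ¬ d ^ k ∣ n := by
  refine ⟨fun h d hd => h d (mem_Icc.1 hd).1, fun h d hd hdvd => h d (mem_Icc.2 ⟨hd, ?_⟩) hdvd⟩
  exact Nat.le_of_dvd hn ((dvd_pow_self d hk).trans hdvd)

theorem Qf_eq_card_filter {k : ℕ} (hk : k ≠ 0) (x : ℝ) :
    Qf k x = #{n ∈ Icc 1 ⌊x⌋₊ | ∀ d ∈ Icc (2 : ℕ) n, ¬ d ^ k ∣ n} := by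
  classical
  unfold Qf
  congr 1
  exact filter_congr fun n hn => kFree_iff_forall_mem_Icc (n := n) hk (mem_Icc.1 hn).1

theorem sum_range_one_div_pow_le_riemannZeta_re {k : ℕ} (hk : 1 < k) (N : ℕ) :
    ∑ n ∈ range N, 1 / (n : ℝ) ^ k ≤ (riemannZeta k).re := by
  have hre : (riemannZeta k).re = ∑' n : ℕ, 1 / (n : ℝ) ^ k := by
    rw [zeta_nat_eq_tsum_of_gt_one hk, ← Complex.ofReal_re (∑' n : ℕ, 1 / (n : ℝ) ^ k),
      Complex.ofReal_tsum]
    push_cast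
    rfl
  rw [hre]
  exact (Real.summable_one_div_nat_pow.2 hk).sum_le_tsum _ fun n _ => by positivity

theorem riemannZeta_three_re_gt : (1.202 : ℝ) < (riemannZeta 3).re := by
  refine lt_of_lt_of_le ?_ (sum_range_one_div_pow_le_riemannZeta_re (k := 3) (by norm_num) 101)
  norm_num [sum_range_succ]

theorem rpow_one_sixth_239_lt : (239 : ℝ) ^ ((1 : ℝ) / 6) < 2.4914 := by
  rw [one_div, Real.rpow_inv_lt_iff_of_pos (by norm_num) (by norm_num) (by norm_num)]
  norm_num

set_option maxRecDepth 10000 in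
theorem card_cubefree_Icc_239 : #{n ∈ Icc 1 239 | ∀ d ∈ Icc (2 : ℕ) n, ¬ d ^ 3 ∣ n} = 202 := by
  decide

theorem Q3_at_239 :
    Qf 3 239 = 202 ∧
    (202 : ℝ) - 239 / (riemannZeta 3).re > 1.27 * (239 : ℝ) ^ ((1 : ℝ) / 6) := by
  refine ⟨?_, ?_⟩
  · rw [Qf_eq_card_filter three_ne_zero, show ⌊(239 : ℝ)⌋₊ = 239 by norm_num]
    exact card_cubefree_Icc_239
  · have hζ := riemannZeta_three_re_gt
    have hdiv : 239 / (riemannZeta 3).re < 198.8353 := by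
      rw [div_lt_iff₀ (by linarith)]
      linarith
    linarith [rpow_one_sixth_239_lt]
end
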